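/- arXiv:1905.10965 — 7 statements merged into one kernel-verified Lean document; each statement's English description precedes it below -/
import Mathlib

section
/- For positive reals d, f and real e with 4df - e² > 0, the integral ∫_{-∞}^{∞} ln(dx² + ex + f)/(x² + 1) dx equals π·ln(d + f + √(4df − e²)). -/
/-!
Completing the square, `d x² + e x + f = d ((x - a)² + t²)` with `t > 0`, reduces the claim to
`I(b) := ∫ log ((x - a)² + b²) / (x² + 1) = π log (a² + (1 + b)²)` for `b > 0`.
Differentiating under the integral sign, `I'(b) = 2b ∫ dx / (((x - a)² + b²)(x² + 1))`, and a
partial-fraction antiderivative evaluates this to `2π (1 + b) / (a² + (1 + b)²)`, the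
derivative of the right-hand side. So the difference is constant on `(0, ∞)`; it tends to `0`
as `b → ∞` because `I(b) - π log b² = ∫ log (((x - a) / b)² + 1) / (x² + 1)` is continuous in
`1 / b` by dominated convergence and vanishes at `1 / b = 0`.
-/

open MeasureTheory Real Filter Topology Bornology

lemma tendsto_cobounded_of_eq_comp_inv {α β : Type*} [NormedDivisionRing α] [TopologicalSpace β]
    {f g : α → β} (hfg : ∀ x ≠ 0, f x = g x⁻¹) (hg : ContinuousAt g 0) :
    Tendsto f (cobounded α) (𝓝 (g 0)) :=
  (hg.tendsto.comp tendsto_inv₀_cobounded).congr'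
    ((eventually_ne_cobounded 0).mono fun x hx => (hfg x hx).symm)

lemma tendsto_log_sub_sq_add_sq_sub_log_sq_add_one (a : ℝ) {t : ℝ} (ht : t ≠ 0) :
    Tendsto (fun x => log ((x - a) ^ 2 + t ^ 2) - log (x ^ 2 + 1)) (cobounded ℝ) (𝓝 0) := by
  have hratio :
      Tendsto (fun x => ((x - a) ^ 2 + t ^ 2) / (x ^ 2 + 1)) (cobounded ℝ) (𝓝 1) := by
    convert tendsto_cobounded_of_eq_comp_inv
      (g := fun u => ((1 - a * u) ^ 2 + t ^ 2 * u ^ 2) / (1 + u ^ 2)) (fun x hx => ?_) ?_ using 2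
    · norm_num
    · field_simp
    · exact ContinuousAt.div (by fun_prop) (by fun_prop) (by norm_num)
  have hlog := (continuousAt_log one_ne_zero).tendsto.comp hratio
  rw [log_one] at hlog
  exact hlog.congr fun x => log_div (by positivity) (by positivity)

lemma integrable_inv_sq_add_one : Integrable fun x : ℝ => (x ^ 2 + 1)⁻¹ := by
  simpa only [add_comm] using integrable_inv_one_add_sq

lemma integral_inv_sq_add_one : ∫ x : ℝ, (x ^ 2 + 1)⁻¹ = π := by
  simpa only [add_comm] using integral_univ_inv_one_add_sq

lemma integrable_inv_sub_sq_add_sq_mul_inv_sq_add_one (a : ℝ) {t : ℝ} (ht : t ≠ 0) :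
    Integrable fun x => ((x - a) ^ 2 + t ^ 2)⁻¹ * (x ^ 2 + 1)⁻¹ := by
  refine (integrable_inv_sq_add_one.const_mul (t ^ 2)⁻¹).mono' (by fun_prop) ?_
  refine ae_of_all _ fun x => ?_
  rw [norm_of_nonneg (by positivity)]
  gcongr
  nlinarith [sq_nonneg (x - a)]

lemma tendsto_arctan_div_atTop (a : ℝ) {t : ℝ} (ht : 0 < t) :
    Tendsto (fun x => arctan ((x - a) / t)) atTop (𝓝 (π / 2)) :=
  (tendsto_nhds_of_tendsto_nhdsWithin tendsto_arctan_atTop).comp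
    ((tendsto_atTop_add_const_right _ (-a) tendsto_id).atTop_div_const ht)

lemma tendsto_arctan_div_atBot (a : ℝ) {t : ℝ} (ht : 0 < t) :
    Tendsto (fun x => arctan ((x - a) / t)) atBot (𝓝 (-(π / 2))) :=
  (tendsto_nhds_of_tendsto_nhdsWithin tendsto_arctan_atBot).comp
    ((tendsto_atBot_add_const_right _ (-a) tendsto_id).atBot_div_const ht)

lemma integral_inv_sq_add_one_sq : ∫ x : ℝ, ((x ^ 2 + 1) ^ 2)⁻¹ = π / 2 := by
  set F := fun x : ℝ => x / (2 * (x ^ 2 + 1)) + arctan x / 2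
  have hF : ∀ x, HasDerivAt F ((x ^ 2 + 1) ^ 2)⁻¹ x := by
    intro x
    have hden : HasDerivAt (fun x : ℝ => 2 * (x ^ 2 + 1)) (2 * (2 * x)) x := by
      simpa using ((hasDerivAt_pow 2 x).add_const 1).const_mul 2
    refine (((hasDerivAt_id' x).div hden (by positivity)).add
      ((hasDerivAt_arctan x).div_const 2)).congr_deriv ?_
    field_simp
    ring
  have hrat : Tendsto (fun x : ℝ => x / (2 * (x ^ 2 + 1))) (cobounded ℝ) (𝓝 0) := by
    convert tendsto_cobounded_of_eq_comp_inv (g := fun u : ℝ => u / (2 * (1 + u ^ 2)))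
      (fun x hx => ?_) (ContinuousAt.div (by fun_prop) (by fun_prop) (by norm_num)) using 2
    · norm_num
    · field_simp
  have htop : Tendsto F atTop (𝓝 (0 + π / 2 / 2)) :=
    (hrat.mono_left IsOrderBornology.atTop_le_cobounded).add
      ((tendsto_nhds_of_tendsto_nhdsWithin tendsto_arctan_atTop).div_const 2)
  have hbot : Tendsto F atBot (𝓝 (0 + -(π / 2) / 2)) :=
    (hrat.mono_left IsOrderBornology.atBot_le_cobounded).add
      ((tendsto_nhds_of_tendsto_nhdsWithin tendsto_arctan_atBot).div_const 2)
  have hint : Integrable fun x : ℝ => ((x ^ 2 + 1) ^ 2)⁻¹ := by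
    simpa [sq] using integrable_inv_sub_sq_add_sq_mul_inv_sq_add_one 0 one_ne_zero
  rw [integral_of_hasDerivAt_of_tendsto hF hint hbot htop]
  ring

lemma integral_inv_sub_sq_add_sq_mul_inv_sq_add_one_of_pos (a : ℝ) {t : ℝ} (ht : 0 < t)
    (hat : 0 < a ^ 2 + (1 - t) ^ 2) :
    ∫ x, ((x - a) ^ 2 + t ^ 2)⁻¹ * (x ^ 2 + 1)⁻¹ =
      π * (1 + t) / (t * (a ^ 2 + (1 + t) ^ 2)) := by
  -- `Δ` is the resultant of the two quadratics; it vanishes only when they coincide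
  set Δ := (a ^ 2 + (1 + t) ^ 2) * (a ^ 2 + (1 - t) ^ 2)
  set α := -a / Δ
  set β := (a ^ 2 + 1 - t ^ 2) / (t * Δ)
  set γ := (a ^ 2 + t ^ 2 - 1) / Δ
  set F := fun x => α * (log ((x - a) ^ 2 + t ^ 2) - log (x ^ 2 + 1)) +
    (β * arctan ((x - a) / t) + γ * arctan x)
  have hF : ∀ x, HasDerivAt F (((x - a) ^ 2 + t ^ 2)⁻¹ * (x ^ 2 + 1)⁻¹) x := by
    intro x
    have h₁ : HasDerivAt (fun x => (x - a) ^ 2 + t ^ 2) (2 * (x - a)) x := by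
      simpa using (((hasDerivAt_id' x).sub_const a).pow 2).add_const (t ^ 2)
    have h₂ : HasDerivAt (fun x : ℝ => x ^ 2 + 1) (2 * x) x := by
      simpa using (hasDerivAt_pow 2 x).add_const 1
    have h₃ : HasDerivAt (fun x => arctan ((x - a) / t))
        (1 / (1 + ((x - a) / t) ^ 2) * (1 / t)) x := by
      simpa using (((hasDerivAt_id' x).sub_const a).div_const t).arctan
    refine ((((h₁.log (by positivity)).sub (h₂.log (by positivity))).const_mul α).add
      ((h₃.const_mul β).add ((hasDerivAt_arctan x).const_mul γ))).congr_deriv ?_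
    simp only [α, β, γ, Δ]
    field_simp
    ring
  have htop : Tendsto F atTop (𝓝 (α * 0 + (β * (π / 2) + γ * (π / 2)))) :=
    ((tendsto_log_sub_sq_add_sq_sub_log_sq_add_one a ht.ne').mono_left
      IsOrderBornology.atTop_le_cobounded |>.const_mul α).add
      (((tendsto_arctan_div_atTop a ht).const_mul β).add
        ((tendsto_nhds_of_tendsto_nhdsWithin tendsto_arctan_atTop).const_mul γ))
  have hbot : Tendsto F atBot (𝓝 (α * 0 + (β * -(π / 2) + γ * -(π / 2)))) :=
    ((tendsto_log_sub_sq_add_sq_sub_log_sq_add_one a ht.ne').mono_left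
      IsOrderBornology.atBot_le_cobounded |>.const_mul α).add
      (((tendsto_arctan_div_atBot a ht).const_mul β).add
        ((tendsto_nhds_of_tendsto_nhdsWithin tendsto_arctan_atBot).const_mul γ))
  rw [integral_of_hasDerivAt_of_tendsto hF
    (integrable_inv_sub_sq_add_sq_mul_inv_sq_add_one a ht.ne') hbot htop]
  simp only [β, γ, Δ]
  field_simp
  ring

lemma integral_inv_sub_sq_add_sq_mul_inv_sq_add_one (a : ℝ) {t : ℝ} (ht : 0 < t) :
    ∫ x, ((x - a) ^ 2 + t ^ 2)⁻¹ * (x ^ 2 + 1)⁻¹ =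
      π * (1 + t) / (t * (a ^ 2 + (1 + t) ^ 2)) := by
  rcases (add_nonneg (sq_nonneg a) (sq_nonneg (1 - t))).lt_or_eq with hat | hat
  · exact integral_inv_sub_sq_add_sq_mul_inv_sq_add_one_of_pos a ht hat
  · obtain ⟨rfl, rfl⟩ : a = 0 ∧ t = 1 := by
      constructor <;> nlinarith [sq_nonneg a, sq_nonneg (1 - t)]
    simp only [sub_zero, one_pow, ← sq, inv_pow]
    rw [integral_inv_sq_add_one_sq]
    ring

lemma integrable_log_sq_add_one_div_sq_add_one :
    Integrable fun x : ℝ => log (x ^ 2 + 1) / (x ^ 2 + 1) := by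
  have hdom : Integrable fun x : ℝ => 4 * (1 + ‖x‖ ^ 2) ^ (-(3 / 2 : ℝ) / 2) :=
    (integrable_rpow_neg_one_add_norm_sq (by norm_num)).const_mul 4
  refine hdom.mono' (by fun_prop : Measurable _).aestronglyMeasurable (ae_of_all _ fun x => ?_)
  have hy : 0 < x ^ 2 + 1 := by positivity
  rw [norm_of_nonneg (div_nonneg (log_nonneg (by nlinarith)) hy.le), norm_eq_abs, sq_abs,
    add_comm 1, div_le_iff₀ hy]
  calc log (x ^ 2 + 1) ≤ (x ^ 2 + 1) ^ (1 / 4 : ℝ) / (1 / 4) :=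
        log_le_rpow_div hy.le (by norm_num)
    _ = 4 * (x ^ 2 + 1) ^ (-(3 / 2 : ℝ) / 2) * (x ^ 2 + 1) := by
      rw [mul_assoc, ← rpow_add_one hy.ne']
      norm_num
      ring

lemma integrable_log_div_sq_add_one_of_le {g : ℝ → ℝ} (hg : Measurable g) {m M : ℝ}
    (hm : 0 < m) (hlow : ∀ x, m ≤ g x) (hup : ∀ x, g x ≤ M * (x ^ 2 + 1)) :
    Integrable fun x => log (g x) / (x ^ 2 + 1) := by
  have hM : 0 < M := by simpa using hm.trans_le ((hlow 0).trans (hup 0))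
  refine ((integrable_inv_sq_add_one.const_mul (|log m| + |log M|)).add
    integrable_log_sq_add_one_div_sq_add_one).mono'
    (by fun_prop : Measurable _).aestronglyMeasurable (ae_of_all _ fun x => ?_)
  have hx : 0 < x ^ 2 + 1 := by positivity
  have hg₀ : 0 < g x := hm.trans_le (hlow x)
  have hlog_low : log m ≤ log (g x) := log_le_log hm (hlow x)
  have hlog_up : log (g x) ≤ log M + log (x ^ 2 + 1) := by
    rw [← log_mul hM.ne' hx.ne']
    exact log_le_log hg₀ (hup x)
  have hlog_sq : 0 ≤ log (x ^ 2 + 1) := log_nonneg (by nlinarith)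
  rw [norm_div, norm_of_nonneg hx.le, norm_eq_abs, Pi.add_apply, ← div_eq_mul_inv, ← add_div]
  gcongr
  rw [abs_le]
  constructor <;> linarith [neg_abs_le (log m), le_abs_self (log M), abs_nonneg (log M),
    abs_nonneg (log m)]

lemma integrable_log_sub_sq_add_sq_div_sq_add_one (a : ℝ) {t : ℝ} (ht : t ≠ 0) :
    Integrable fun x => log ((x - a) ^ 2 + t ^ 2) / (x ^ 2 + 1) := by
  refine integrable_log_div_sq_add_one_of_le (by fun_prop) (m := t ^ 2) (M := 2 * a ^ 2 + t ^ 2 + 2)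
    (by positivity) (fun x => by nlinarith [sq_nonneg (x - a)]) (fun x => ?_)
  nlinarith [sq_nonneg (x + a), sq_nonneg a, sq_nonneg x, mul_nonneg (sq_nonneg a) (sq_nonneg x),
    mul_nonneg (sq_nonneg t) (sq_nonneg x)]

lemma hasDerivAt_integral_log_sub_sq_add_sq_div_sq_add_one (a : ℝ) {b₀ : ℝ}
    (hb₀ : 0 < b₀) :
    HasDerivAt (fun b => ∫ x, log ((x - a) ^ 2 + b ^ 2) / (x ^ 2 + 1))
      (2 * b₀ * ∫ x, ((x - a) ^ 2 + b₀ ^ 2)⁻¹ * (x ^ 2 + 1)⁻¹) b₀ := by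
  have hF := hasDerivAt_integral_of_dominated_loc_of_deriv_le (μ := volume) (x₀ := b₀)
    (F := fun b x => log ((x - a) ^ 2 + b ^ 2) / (x ^ 2 + 1))
    (F' := fun b x => 2 * b * (((x - a) ^ 2 + b ^ 2)⁻¹ * (x ^ 2 + 1)⁻¹))
    (bound := fun x => 4 / b₀ * (x ^ 2 + 1)⁻¹) (Ioi_mem_nhds (half_lt_self hb₀))
    (Eventually.of_forall fun b => (by fun_prop : Measurable _).aestronglyMeasurable)
    (integrable_log_sub_sq_add_sq_div_sq_add_one a hb₀.ne')
    (by fun_prop : Measurable _).aestronglyMeasurable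
    (ae_of_all _ fun x b (hb : b₀ / 2 < b) => ?_)
    (integrable_inv_sq_add_one.const_mul _)
    (ae_of_all _ fun x b (hb : b₀ / 2 < b) => ?_)
  · simpa only [integral_const_mul] using hF.2
  · have hb' : 0 < b := by linarith
    have hq : b ^ 2 ≤ (x - a) ^ 2 + b ^ 2 := by nlinarith [sq_nonneg (x - a)]
    rw [norm_of_nonneg (by positivity), ← mul_assoc]
    gcongr
    rw [← div_eq_mul_inv, div_le_div_iff₀ (by positivity) hb₀]
    nlinarith
  · have hq : 0 < (x - a) ^ 2 + b ^ 2 := by nlinarith [sq_nonneg (x - a)]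
    refine ((((hasDerivAt_pow 2 b).const_add ((x - a) ^ 2)).log hq.ne').div_const
      (x ^ 2 + 1)).congr_deriv ?_
    field_simp
    ring

lemma continuousAt_integral_log_mul_sq_add_one_div_sq_add_one (a : ℝ) :
    ContinuousAt (fun u => ∫ x, log (((x - a) * u) ^ 2 + 1) / (x ^ 2 + 1)) 0 := by
  refine continuousAt_of_dominated
    (Eventually.of_forall fun u => (by fun_prop : Measurable _).aestronglyMeasurable)
    (eventually_of_mem (Ioo_mem_nhds neg_one_lt_zero one_pos) fun u hu => ae_of_all _ fun x => ?_)
    (by simpa using integrable_log_sub_sq_add_sq_div_sq_add_one a one_ne_zero)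
    (ae_of_all _ fun x => ?_)
  · have hu2 : u ^ 2 ≤ 1 := by nlinarith [hu.1, hu.2]
    have hle : ((x - a) * u) ^ 2 ≤ (x - a) ^ 2 := by
      rw [mul_pow]
      nlinarith [sq_nonneg (x - a)]
    rw [norm_of_nonneg (div_nonneg (log_nonneg (by nlinarith)) (by positivity))]
    exact div_le_div_of_nonneg_right (log_le_log (by positivity) (by linarith)) (by positivity)
  · exact (ContinuousAt.log (by fun_prop) (by positivity)).div_const _

lemma integral_log_sub_sq_add_sq_div_sq_add_one_eq (a : ℝ) {b : ℝ} (hb : 0 < b) :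
    ∫ x, log ((x - a) ^ 2 + b ^ 2) / (x ^ 2 + 1) =
      π * log (b ^ 2) + ∫ x, log (((x - a) * b⁻¹) ^ 2 + 1) / (x ^ 2 + 1) := by
  have hsplit : ∀ x, log (((x - a) * b⁻¹) ^ 2 + 1) / (x ^ 2 + 1) =
      log ((x - a) ^ 2 + b ^ 2) / (x ^ 2 + 1) - log (b ^ 2) * (x ^ 2 + 1)⁻¹ := by
    intro x
    have hscale : ((x - a) * b⁻¹) ^ 2 + 1 = ((x - a) ^ 2 + b ^ 2) / b ^ 2 := by field_simp
    rw [hscale, log_div (by positivity) (by positivity)]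
    ring
  simp only [hsplit]
  rw [integral_sub (integrable_log_sub_sq_add_sq_div_sq_add_one a hb.ne')
    (integrable_inv_sq_add_one.const_mul _), integral_const_mul, integral_inv_sq_add_one]
  ring

lemma tendsto_integral_log_sub_sq_add_sq_div_sq_add_one_sub_log (a : ℝ) :
    Tendsto (fun b => (∫ x, log ((x - a) ^ 2 + b ^ 2) / (x ^ 2 + 1)) -
      π * log (a ^ 2 + (1 + b) ^ 2)) atTop (𝓝 0) := by
  set ψ := fun u => (∫ x, log (((x - a) * u) ^ 2 + 1) / (x ^ 2 + 1)) -
    π * log ((a * u) ^ 2 + (u + 1) ^ 2)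
  have hψ : ContinuousAt ψ 0 :=
    (continuousAt_integral_log_mul_sq_add_one_div_sq_add_one a).sub
      (continuousAt_const.mul (ContinuousAt.log (by fun_prop) (by norm_num)))
  have hψ₀ : ψ 0 = 0 := by simp [ψ]
  rw [← hψ₀]
  refine (hψ.tendsto.comp tendsto_inv_atTop_zero).congr' ?_
  filter_upwards [eventually_gt_atTop 0] with b hb
  have hlog :
      log (a ^ 2 + (1 + b) ^ 2) = log (b ^ 2) + log ((a * b⁻¹) ^ 2 + (b⁻¹ + 1) ^ 2) := by
    rw [← log_mul (by positivity) (by positivity)]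
    congr 1
    field_simp
  simp only [Function.comp, ψ, integral_log_sub_sq_add_sq_div_sq_add_one_eq a hb, hlog]
  ring

theorem integral_log_sub_sq_add_sq_div_sq_add_one (a : ℝ) {b : ℝ} (hb : 0 < b) :
    ∫ x, log ((x - a) ^ 2 + b ^ 2) / (x ^ 2 + 1) = π * log (a ^ 2 + (1 + b) ^ 2) := by
  set φ := fun b => (∫ x, log ((x - a) ^ 2 + b ^ 2) / (x ^ 2 + 1)) -
    π * log (a ^ 2 + (1 + b) ^ 2)
  have hφ' : ∀ b ∈ Set.Ioi (0 : ℝ), HasDerivAt φ 0 b := by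
    intro b (hb : 0 < b)
    have hq : HasDerivAt (fun b => a ^ 2 + (1 + b) ^ 2) (2 * (1 + b)) b := by
      simpa using (((hasDerivAt_id' b).const_add 1).pow 2).const_add (a ^ 2)
    refine ((hasDerivAt_integral_log_sub_sq_add_sq_div_sq_add_one a hb).sub
      ((hq.log (by positivity)).const_mul π)).congr_deriv ?_
    rw [integral_inv_sub_sq_add_sq_mul_inv_sq_add_one a hb]
    field_simp
    ring
  obtain ⟨c, hc⟩ := isOpen_Ioi.exists_is_const_of_deriv_eq_zero isPreconnected_Ioi
    (fun b hb => (hφ' b hb).differentiableAt.differentiableWithinAt)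
    (fun b hb => (hφ' b hb).deriv)
  have hc₀ : c = 0 := tendsto_nhds_unique
    (tendsto_const_nhds.congr' (eventually_gt_atTop 0 |>.mono fun b hb => (hc b hb).symm))
    (tendsto_integral_log_sub_sq_add_sq_div_sq_add_one_sub_log a)
  linarith [hc b hb]

theorem stmt_0_general (d e f : ℝ) (hd : 0 < d) (h : 0 < 4 * d * f - e ^ 2) :
    ∫ x : ℝ, Real.log (d * x ^ 2 + e * x + f) / (x ^ 2 + 1) =
      π * Real.log (d + f + Real.sqrt (4 * d * f - e ^ 2)) := by
  set r := √(4 * d * f - e ^ 2)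
  have hr : r ^ 2 = 4 * d * f - e ^ 2 := sq_sqrt h.le
  have hr₀ : 0 < r := sqrt_pos.mpr h
  set a := -e / (2 * d)
  set t := r / (2 * d)
  have ht : 0 < t := by positivity
  have hsplit : ∀ x, log (d * x ^ 2 + e * x + f) / (x ^ 2 + 1) =
      log d * (x ^ 2 + 1)⁻¹ + log ((x - a) ^ 2 + t ^ 2) / (x ^ 2 + 1) := by
    intro x
    have hsq : d * x ^ 2 + e * x + f = d * ((x - a) ^ 2 + t ^ 2) := by
      simp only [a, t]
      field_simp
      linear_combination -hr
    rw [hsq, log_mul hd.ne' (by positivity)]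
    ring
  have hvertex : d * (a ^ 2 + (1 + t) ^ 2) = d + f + r := by
    simp only [a, t]
    field_simp
    linear_combination hr
  simp only [hsplit]
  rw [integral_add (integrable_inv_sq_add_one.const_mul _)
      (integrable_log_sub_sq_add_sq_div_sq_add_one a ht.ne'),
    integral_const_mul, integral_inv_sq_add_one, integral_log_sub_sq_add_sq_div_sq_add_one a ht,
    ← hvertex, log_mul hd.ne' (by positivity)]
  ring

theorem stmt_0 (d e f : ℝ) (hd : 0 < d) (hf : 0 < f) (h : 0 < 4 * d * f - e ^ 2) :
    ∫ x : ℝ, Real.log (d * x ^ 2 + e * x + f) / (x ^ 2 + 1) =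
      π * Real.log (d + f + Real.sqrt (4 * d * f - e ^ 2)) :=
  stmt_0_general d e f hd h
end

section
/- For reals a > 0, z > 0, and b ∈ (−1, 1], the integral ∫_{−∞}^{∞} ln(a² − 2abx + x²)/(x² + z²) dx equals (π/z)·ln(z² + 2az√(1−b²) + a²). -/
/-!
Put `w = ab + i a√(1 - b²)`, a point of the closed upper half-plane with
`a² - 2abx + x² = |x - w|²` and `z² + 2az√(1 - b²) + a² = |w + iz|²`.
The Cayley transform `u ↦ (u - iz) / (u + iz)` maps the real line onto the unit circle and the
measure `dx / (x² + z²)` to `π / z` times normalised arc length. Writing `ζ`, `ζ_w` for the images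
of `x` and `w`, it also factors `|x - w| = |w + iz| |ζ - ζ_w| / |ζ - 1|`. Both `ζ_w` and `1` lie in
the closed unit disc, so `log |ζ - ζ_w|` and `log |ζ - 1|` have circle average zero (Jensen), and
what remains is `(π / z) log |w + iz|²`.
-/

open MeasureTheory Real

open Complex (I)

noncomputable def cayley (z : ℝ) (u : ℂ) : ℂ := (u - z * I) / (u + z * I)

section Cayley

variable {z : ℝ}

lemma add_mul_I_ne_zero (hz : 0 < z) {w : ℂ} (hw : 0 ≤ w.im) : w + z * I ≠ 0 := by
  intro h
  have := congrArg Complex.im h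
  simp only [Complex.add_im, Complex.mul_im, Complex.ofReal_re, Complex.ofReal_im,
    Complex.I_re, Complex.I_im, Complex.zero_im] at this
  linarith

lemma norm_cayley_le_one (hz : 0 < z) {w : ℂ} (hw : 0 ≤ w.im) : ‖cayley z w‖ ≤ 1 := by
  rw [cayley, norm_div, div_le_one (norm_pos_iff.2 (add_mul_I_ne_zero hz hw)),
    ← sq_le_sq₀ (norm_nonneg _) (norm_nonneg _), Complex.sq_norm, Complex.sq_norm,
    Complex.normSq_apply, Complex.normSq_apply]
  simp only [Complex.sub_re, Complex.add_re, Complex.sub_im, Complex.add_im, Complex.mul_re,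
    Complex.mul_im, Complex.ofReal_re, Complex.ofReal_im, Complex.I_re, Complex.I_im]
  nlinarith

lemma sub_mul_cayley_sub_one {u w : ℂ} (hu : u + z * I ≠ 0) (hw : w + z * I ≠ 0) :
    (w - u) * (cayley z u - 1) = (w + z * I) * (cayley z u - cayley z w) := by
  rw [cayley, cayley]
  field_simp
  ring

lemma cayley_sub_one_ne_zero (hz : z ≠ 0) {u : ℂ} (hu : u + z * I ≠ 0) : cayley z u - 1 ≠ 0 := by
  rw [cayley, div_sub_one hu, show u - z * I - (u + z * I) = -(2 * z) * I by ring]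
  exact div_ne_zero (by simp [hz]) hu

lemma log_norm_sub_eq (hz : z ≠ 0) {u w : ℂ} (hu : u + z * I ≠ 0) (hw : w + z * I ≠ 0)
    (huw : u ≠ w) :
    log ‖u - w‖ = log ‖w + z * I‖ + log ‖cayley z u - cayley z w‖ - log ‖cayley z u - 1‖ := by
  have hfac := sub_mul_cayley_sub_one hu hw
  have hne : (w - u) * (cayley z u - 1) ≠ 0 :=
    mul_ne_zero (sub_ne_zero.2 huw.symm) (cayley_sub_one_ne_zero hz hu)
  have hne' : (w + z * I) * (cayley z u - cayley z w) ≠ 0 := hfac ▸ hne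
  have hlog := congrArg (fun v => log ‖v‖) hfac
  simp only [norm_mul] at hlog
  rw [log_mul (by simpa using left_ne_zero_of_mul hne) (by simpa using right_ne_zero_of_mul hne),
    log_mul (by simpa using left_ne_zero_of_mul hne') (by simpa using right_ne_zero_of_mul hne'),
    norm_sub_rev] at hlog
  linarith

lemma circleMap_pi_add_two_mul_arctan (hz : 0 < z) (x : ℝ) :
    circleMap 0 1 (π + 2 * arctan (x / z)) = cayley z x := by
  set φ := arctan (x / z)
  have htan : (x : ℂ) * cos φ = z * sin φ := by
    have := tan_arctan (x / z)
    rw [tan_eq_sin_div_cos, div_eq_div_iff (cos_arctan_pos _).ne' hz.ne'] at this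
    exact_mod_cast this.symm.trans (mul_comm _ _)
  have hpy : (sin φ : ℂ) ^ 2 + cos φ ^ 2 = 1 := by exact_mod_cast sin_sq_add_cos_sq φ
  rw [circleMap_zero, cayley, eq_div_iff (add_mul_I_ne_zero hz (w := x) (by simp))]
  push_cast
  rw [add_mul, Complex.exp_add, Complex.exp_pi_mul_I, mul_assoc 2,
    show (2 : ℂ) = (2 : ℕ) by norm_num, Complex.exp_nat_mul, Complex.exp_mul_I,
    ← Complex.ofReal_cos, ← Complex.ofReal_sin]
  -- `tan φ = x / z` gives `x - iz = -i r e^{iφ}` and `x + iz = i r e^{-iφ}` with `r = √(x² + z²)`.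
  linear_combination (-2 * cos φ - 2 * sin φ * I : ℂ) * htan + (x - z * I : ℂ) * hpy -
    ((sin φ : ℂ) ^ 2 * (x + z * I) + 2 * cos φ * sin φ * z) * Complex.I_sq

lemma range_pi_add_two_mul_arctan_div (hz : 0 < z) :
    Set.range (fun x : ℝ => π + 2 * arctan (x / z)) = Set.Ioo 0 (2 * π) := by
  have hsurj : Function.Surjective (· / z) := fun y => ⟨y * z, by field_simp⟩
  have : (fun x : ℝ => π + 2 * arctan (x / z)) = (fun t => π + 2 * t) ∘ arctan ∘ (· / z) := rfl
  rw [this, Set.range_comp, hsurj.range_comp, range_arctan]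
  ext θ
  simp only [Set.mem_image, Set.mem_Ioo]
  constructor
  · rintro ⟨t, ⟨h1, h2⟩, rfl⟩
    constructor <;> linarith
  · rintro ⟨h1, h2⟩
    exact ⟨(θ - π) / 2, ⟨by linarith, by linarith⟩, by ring⟩

lemma hasDerivAt_pi_add_two_mul_arctan_div (hz : 0 < z) (x : ℝ) :
    HasDerivAt (fun x : ℝ => π + 2 * arctan (x / z)) (2 * z * (x ^ 2 + z ^ 2)⁻¹) x := by
  refine ((((hasDerivAt_id' x).div_const z).arctan).const_mul 2 |>.const_add π).congr_deriv ?_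
  field_simp
  ring

theorem integral_inv_sq_add_sq_smul_comp_cayley {E : Type*} [NormedAddCommGroup E]
    [NormedSpace ℝ E] [CompleteSpace E] (hz : 0 < z) (g : ℂ → E) :
    ∫ x : ℝ, (x ^ 2 + z ^ 2)⁻¹ • g (cayley z x) =
      (π / z) • circleAverage g 0 1 := by
  have hmono : StrictMono (fun x : ℝ => π + 2 * arctan (x / z)) := fun x y hxy => by
    have := arctan_strictMono (div_lt_div_of_pos_right hxy hz)
    dsimp only
    linarith
  have hcov := integral_image_eq_integral_abs_deriv_smul MeasurableSet.univ
    (fun x _ => (hasDerivAt_pi_add_two_mul_arctan_div hz x).hasDerivWithinAt)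
    hmono.injective.injOn (fun θ => g (circleMap 0 1 θ))
  rw [Set.image_univ, range_pi_add_two_mul_arctan_div hz, Measure.restrict_univ] at hcov
  rw [circleAverage_def, intervalIntegral.integral_of_le (by positivity),
    integral_Ioc_eq_integral_Ioo, hcov, ← integral_smul, ← integral_smul]
  congr 1 with x
  rw [circleMap_pi_add_two_mul_arctan hz, smul_smul, smul_smul,
    abs_of_pos (by positivity)]
  congr 1
  field_simp

theorem integral_log_norm_sub_div_sq_add_sq (hz : 0 < z) {w : ℂ} (hw : 0 ≤ w.im) :
    ∫ x : ℝ, log ‖(x : ℂ) - w‖ / (x ^ 2 + z ^ 2) = π / z * log ‖w + z * I‖ := by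
  set G : ℂ → ℝ := fun ζ => log ‖w + z * I‖ + log ‖ζ - cayley z w‖ - log ‖ζ - 1‖
  have hG : circleAverage G 0 1 = log ‖w + z * I‖ := by
    have hc : cayley z w ∈ Metric.closedBall 0 |1| := by
      simpa using norm_cayley_le_one hz hw
    have h1 : (1 : ℂ) ∈ Metric.closedBall 0 |1| := by simp
    have hconst : CircleIntegrable (fun _ : ℂ => log ‖w + z * I‖) 0 1 := circleIntegrable_const ..
    have hlog (c : ℂ) : CircleIntegrable (fun ζ => log ‖ζ - c‖) 0 1 :=
      circleIntegrable_log_norm_sub_const 1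
    rw [circleAverage_fun_sub (f₁ := fun ζ => log ‖w + z * I‖ + log ‖ζ - cayley z w‖)
        (hconst.add (hlog _)) (hlog 1), circleAverage_fun_add hconst (hlog _),
      circleAverage_const, circleAverage_log_norm_sub_const_of_mem_closedBall hc,
      circleAverage_log_norm_sub_const_of_mem_closedBall h1, log_one, add_zero, sub_zero]
  have hpt : ∀ᵐ x : ℝ, log ‖(x : ℂ) - w‖ / (x ^ 2 + z ^ 2) =
      (x ^ 2 + z ^ 2)⁻¹ • G (cayley z x) := by
    filter_upwards [volume.ae_ne w.re] with x hx
    rw [smul_eq_mul, inv_mul_eq_div, log_norm_sub_eq hz.ne' (add_mul_I_ne_zero hz (by simp))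
      (add_mul_I_ne_zero hz hw) (fun h => hx (by simp [← h]))]
  rw [integral_congr_ae hpt, integral_inv_sq_add_sq_smul_comp_cayley hz, hG, smul_eq_mul]

end Cayley

theorem stmt_2 (a z b : ℝ) (ha : 0 < a) (hz : 0 < z) (hb1 : -1 < b) (hb2 : b ≤ 1) :
    ∫ x : ℝ, Real.log (a ^ 2 - 2 * a * b * x + x ^ 2) / (x ^ 2 + z ^ 2) =
      (π / z) * Real.log (z ^ 2 + 2 * a * z * Real.sqrt (1 - b ^ 2) + a ^ 2) := by
  set w : ℂ := ⟨a * b, a * √(1 - b ^ 2)⟩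
  have hs : √(1 - b ^ 2) ^ 2 = 1 - b ^ 2 := sq_sqrt (by nlinarith)
  have hquad : ∀ x : ℝ, a ^ 2 - 2 * a * b * x + x ^ 2 = ‖(x : ℂ) - w‖ ^ 2 := fun x => by
    rw [Complex.sq_norm, Complex.normSq_apply]
    simp only [w, Complex.sub_re, Complex.sub_im, Complex.ofReal_re, Complex.ofReal_im]
    linear_combination -a ^ 2 * hs
  have hval : z ^ 2 + 2 * a * z * √(1 - b ^ 2) + a ^ 2 = ‖w + z * I‖ ^ 2 := by
    rw [Complex.sq_norm, Complex.normSq_apply]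
    simp only [w, Complex.add_re, Complex.add_im, Complex.mul_re, Complex.mul_im,
      Complex.ofReal_re, Complex.ofReal_im, Complex.I_re, Complex.I_im]
    linear_combination -a ^ 2 * hs
  simp only [hquad, hval, log_pow, Nat.cast_ofNat, mul_div_assoc]
  rw [integral_const_mul, integral_log_norm_sub_div_sq_add_sq hz (by positivity)]
  ring
end

section
/- The differential entropy of the Cauchy density p_{l,s} equals ln(4πs), i.e., −∫_{−∞}^{∞} p_{l,s}(x) ln p_{l,s}(x) dx = ln(4πs). -/
open MeasureTheory Real

noncomputable def cauchyPdf (l s x : ℝ) : ℝ := s / (π * (s ^ 2 + (x - l) ^ 2))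

/-!
Substituting `x = l + s tan θ` with `θ ∈ (-π/2, π/2)` gives `dx = s dθ / cos² θ` and
`p_{l,s}(x) = cos² θ / (π s)`, so `p dx = dθ / π` and the entropy becomes
`log (π s) - (2/π) ∫ log cos θ dθ`. Shifting by `π/2`, the last integral is the classical
`∫₀^π log sin = -π log 2`, whence the value `log (π s) + 2 log 2 = log (4 π s)`.
-/

open Set

theorem integral_log_cos_neg_pi_div_two_pi_div_two :
    ∫ θ in (-(π / 2))..(π / 2), log (cos θ) = -log 2 * π := by
  have h := intervalIntegral.integral_comp_add_right (fun x => log (sin x)) (π / 2)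
    (a := -(π / 2)) (b := π / 2)
  simp only [sin_add_pi_div_two, neg_add_cancel, add_halves] at h
  rw [h, integral_log_sin_zero_pi]

theorem integral_comp_affine_tan {E : Type*} [NormedAddCommGroup E] [NormedSpace ℝ E]
    (l : ℝ) {s : ℝ} (hs : 0 < s) (g : ℝ → E) :
    ∫ θ in Ioo (-(π / 2)) (π / 2), (s / cos θ ^ 2) • g (l + s * tan θ) = ∫ x, g x := by
  have himage : (fun θ => l + s * tan θ) '' Ioo (-(π / 2)) (π / 2) = univ := by
    rw [← image_image (fun y => l + s * y) tan, image_tan_Ioo, image_univ,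
      eq_univ_iff_forall]
    exact fun x => ⟨(x - l) / s, by field_simp; ring⟩
  have hderiv : ∀ θ ∈ Ioo (-(π / 2)) (π / 2),
      HasDerivWithinAt (fun θ => l + s * tan θ) (s / cos θ ^ 2) (Ioo (-(π / 2)) (π / 2)) θ := by
    intro θ hθ
    have h := ((hasDerivAt_tan (cos_pos_of_mem_Ioo hθ).ne').const_mul s).const_add l
    rw [mul_one_div] at h
    exact h.hasDerivWithinAt
  have hinj : InjOn (fun θ => l + s * tan θ) (Ioo (-(π / 2)) (π / 2)) :=
    fun a ha b hb hab => injOn_tan ha hb (mul_left_cancel₀ hs.ne' (add_left_cancel hab))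
  have h := integral_image_eq_integral_abs_deriv_smul measurableSet_Ioo hderiv hinj g
  rw [himage, setIntegral_univ] at h
  rw [h]
  refine setIntegral_congr_fun measurableSet_Ioo fun θ hθ => ?_
  simp only [abs_of_pos (div_pos hs (pow_pos (cos_pos_of_mem_Ioo hθ) 2))]

theorem cauchyPdf_add_mul_tan (l : ℝ) {s θ : ℝ} (hs : s ≠ 0) (hθ : cos θ ≠ 0) :
    cauchyPdf l s (l + s * tan θ) = cos θ ^ 2 / (π * s) := by
  rw [cauchyPdf, ← inv_one_add_tan_sq hθ]
  field_simp
  ring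

theorem integral_Ioo_log_cos_sq_div {c : ℝ} (hc : 0 < c) :
    ∫ θ in Ioo (-(π / 2)) (π / 2), log (cos θ ^ 2 / c) = -π * log (4 * c) := by
  have hsplit : EqOn (fun θ => log (cos θ ^ 2 / c)) (fun θ => 2 * log (cos θ) - log c)
      (Ioo (-(π / 2)) (π / 2)) := fun θ hθ => by
    dsimp only
    rw [log_div (pow_pos (cos_pos_of_mem_Ioo hθ) 2).ne' hc.ne', log_pow, Nat.cast_ofNat]
  have hlogcos : IntervalIntegrable (fun θ => log (cos θ)) volume (-(π / 2)) (π / 2) :=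
    intervalIntegrable_log_cos
  rw [setIntegral_congr_fun measurableSet_Ioo hsplit, ← integral_Ioc_eq_integral_Ioo,
    ← intervalIntegral.integral_of_le (by linarith [pi_pos]),
    intervalIntegral.integral_sub (hlogcos.const_mul 2) intervalIntegrable_const,
    intervalIntegral.integral_const_mul, integral_log_cos_neg_pi_div_two_pi_div_two,
    intervalIntegral.integral_const, smul_eq_mul, show (4 : ℝ) = 2 ^ 2 by norm_num,
    log_mul (by norm_num) hc.ne', log_pow, Nat.cast_ofNat]
  ring

theorem stmt_4 (l s : ℝ) (hs : 0 < s) :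
    -∫ x : ℝ, cauchyPdf l s x * Real.log (cauchyPdf l s x) = Real.log (4 * π * s) := by
  have hintegrand : EqOn
      (fun θ => (s / cos θ ^ 2) • (cauchyPdf l s (l + s * tan θ) *
        log (cauchyPdf l s (l + s * tan θ))))
      (fun θ => log (cos θ ^ 2 / (π * s)) / π) (Ioo (-(π / 2)) (π / 2)) := fun θ hθ => by
    have hcos := cos_pos_of_mem_Ioo hθ
    dsimp only
    rw [smul_eq_mul, cauchyPdf_add_mul_tan l hs.ne' hcos.ne']
    field_simp
  rw [← integral_comp_affine_tan l hs, setIntegral_congr_fun measurableSet_Ioo hintegrand,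
    integral_div, integral_Ioo_log_cos_sq_div (mul_pos pi_pos hs), mul_assoc]
  field_simp
end

section
/- The Kullback–Leibler divergence between any two Cauchy densities is symmetric: KL(p_{l₁,s₁} : p_{l₂,s₂}) = KL(p_{l₂,s₂} : p_{l₁,s₁}) for all l₁, l₂ ∈ ℝ and s₁, s₂ > 0. -/
open MeasureTheory Real

noncomputable def cauchyKL (l₁ s₁ l₂ s₂ : ℝ) : ℝ :=
  ∫ x : ℝ, cauchyPdf l₁ s₁ x * Real.log (cauchyPdf l₁ s₁ x / cauchyPdf l₂ s₂ x)

/-! Substituting `x = φ y` in `∫ p log (p / q)`, where `φ` has Jacobian `J` with `J · (p ∘ φ) = q`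
and `J · (q ∘ φ) = p`, turns it into `∫ q log (q / p)`. For equal scales `φ` is the reflection
`x ↦ l₁ + l₂ - x`. Otherwise it is the inversion `x ↦ c + R / (x - c)`, which maps the Cauchy law with
parameter `z = l + i s` to the one with parameter `c + R / (z̄ - c)`; it swaps `z₁` and `z₂` exactly when
`(z̄₁ - c) (z₂ - c) = R`, i.e. when `s₁ (l₂ - c) = s₂ (l₁ - c)` and `R = (l₁ - c) (l₂ - c) + s₁ s₂`. -/

theorem integral_mul_log_div_comm_of_swap {α : Type*} [MeasurableSpace α] {μ : Measure α}
    {p q J : α → ℝ} {φ : α → α}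
    (hsubst : ∀ f : α → ℝ, ∫ x, f x ∂μ = ∫ x, J x * f (φ x) ∂μ)
    (hJ : ∀ᵐ x ∂μ, J x ≠ 0) (hp : ∀ᵐ x ∂μ, J x * p (φ x) = q x)
    (hq : ∀ᵐ x ∂μ, J x * q (φ x) = p x) :
    ∫ x, p x * log (p x / q x) ∂μ = ∫ x, q x * log (q x / p x) ∂μ := by
  rw [hsubst]
  refine integral_congr_ae ?_
  filter_upwards [hJ, hp, hq] with x hJx hpx hqx
  rw [← mul_assoc, ← mul_div_mul_left _ _ hJx, hpx, hqx]

theorem integral_comp_inversion (c : ℝ) {R : ℝ} (hR : 0 < R) (f : ℝ → ℝ) :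
    ∫ x, f x = ∫ x, R / (x - c) ^ 2 * f (c + R / (x - c)) := by
  set φ : ℝ → ℝ := fun x => c + R / (x - c)
  have hR' : R ≠ 0 := hR.ne'
  have hmaps : Set.MapsTo φ {c}ᶜ {c}ᶜ := fun x hx => by
    have : x - c ≠ 0 := sub_ne_zero.2 hx
    simpa [φ] using div_ne_zero hR' this
  have hinv : Set.InvOn φ φ {c}ᶜ {c}ᶜ := by
    refine ⟨fun x hx => ?_, fun x hx => ?_⟩ <;>
    · have : x - c ≠ 0 := sub_ne_zero.2 hx
      simp only [φ, add_sub_cancel_left, div_div_cancel₀ hR', add_sub_cancel]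
  have hbij : Set.BijOn φ {c}ᶜ {c}ᶜ := hinv.bijOn hmaps hmaps
  have hderiv : ∀ x ∈ ({c}ᶜ : Set ℝ), HasDerivWithinAt φ (-(R / (x - c) ^ 2)) {c}ᶜ x := by
    intro x hx
    have hx : x - c ≠ 0 := sub_ne_zero.2 hx
    have h := ((hasDerivAt_const x R).div ((hasDerivAt_id' x).sub_const c) hx).const_add c
    exact (h.congr_deriv (by ring)).hasDerivWithinAt
  calc ∫ x, f x = ∫ x in φ '' {c}ᶜ, f x := by rw [hbij.image_eq, restrict_compl_singleton]
    _ = ∫ x in {c}ᶜ, |-(R / (x - c) ^ 2)| • f (φ x) :=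
      integral_image_eq_integral_abs_deriv_smul (measurableSet_singleton c).compl hderiv
        hbij.injOn f
    _ = ∫ x, R / (x - c) ^ 2 * f (c + R / (x - c)) := by
      rw [restrict_compl_singleton]
      congr with x
      rw [abs_neg, abs_of_nonneg (by positivity), smul_eq_mul]

theorem cauchyPdf_sub_left (a l s x : ℝ) : cauchyPdf l s (a - x) = cauchyPdf (a - l) s x := by
  simp only [cauchyPdf]
  ring_nf

theorem cauchyPdf_inversion {l s c x : ℝ} (R : ℝ) (hs : s ≠ 0) (hx : x ≠ c) :
    R / (x - c) ^ 2 * cauchyPdf l s (c + R / (x - c)) =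
      cauchyPdf (c + R * (l - c) / ((l - c) ^ 2 + s ^ 2)) (R * s / ((l - c) ^ 2 + s ^ 2)) x := by
  set d := (l - c) ^ 2 + s ^ 2
  set N := s ^ 2 * (x - c) ^ 2 + (R - (l - c) * (x - c)) ^ 2
  have hu : x - c ≠ 0 := sub_ne_zero.2 hx
  have hd : d ≠ 0 := by positivity
  have hN : N ≠ 0 := by positivity
  have h₁ : s ^ 2 + (c + R / (x - c) - l) ^ 2 = N / (x - c) ^ 2 := by
    field_simp; ring
  have h₂ : (R * s / d) ^ 2 + (x - (c + R * (l - c) / d)) ^ 2 = N / d := by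
    field_simp; ring
  rw [cauchyPdf, cauchyPdf, h₁, h₂]
  field_simp

theorem cauchyPdf_inversion_swap {l₁ s₁ l₂ s₂ c R x : ℝ} (hs₁ : s₁ ≠ 0)
    (hc : s₁ * (l₂ - c) = s₂ * (l₁ - c)) (hR : R = (l₁ - c) * (l₂ - c) + s₁ * s₂) (hx : x ≠ c) :
    R / (x - c) ^ 2 * cauchyPdf l₁ s₁ (c + R / (x - c)) = cauchyPdf l₂ s₂ x := by
  have hd : (l₁ - c) ^ 2 + s₁ ^ 2 ≠ 0 := by positivity
  rw [cauchyPdf_inversion R hs₁ hx]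
  subst hR
  congr 1
  · field_simp
    linear_combination (-s₁) * hc
  · field_simp
    linear_combination (l₁ - c) * hc

theorem stmt_6 (l₁ l₂ s₁ s₂ : ℝ) (hs₁ : 0 < s₁) (hs₂ : 0 < s₂) :
    cauchyKL l₁ s₁ l₂ s₂ = cauchyKL l₂ s₂ l₁ s₁ := by
  unfold cauchyKL
  by_cases hs : s₁ = s₂
  · subst hs
    refine integral_mul_log_div_comm_of_swap (J := fun _ => 1) (φ := fun x => l₁ + l₂ - x)
      (fun f => by simp [integral_sub_left_eq_self]) (by simp) ?_ ?_ <;>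
    · filter_upwards with x
      simp [cauchyPdf_sub_left]
  · obtain ⟨c, hc⟩ : ∃ c, s₁ * (l₂ - c) = s₂ * (l₁ - c) :=
      ⟨(s₁ * l₂ - s₂ * l₁) / (s₁ - s₂), by field_simp [sub_ne_zero.2 hs]; ring⟩
    have hR : 0 < (l₁ - c) * (l₂ - c) + s₁ * s₂ := by
      have h : ((l₁ - c) * (l₂ - c) + s₁ * s₂) * s₁ = ((l₁ - c) ^ 2 + s₁ ^ 2) * s₂ := by
        linear_combination (l₁ - c) * hc
      exact (pos_iff_pos_of_mul_pos (h ▸ by positivity)).2 hs₁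
    refine integral_mul_log_div_comm_of_swap (integral_comp_inversion c hR) ?_ ?_ ?_ <;>
      filter_upwards [Measure.ae_ne volume c] with x hx
    · have : x - c ≠ 0 := sub_ne_zero.2 hx
      positivity
    · exact cauchyPdf_inversion_swap hs₁.ne' hc rfl hx
    · exact cauchyPdf_inversion_swap hs₂.ne' hc.symm (by ring) hx
end

section
/- For Cauchy densities with common scale s, the KL divergence KL(p_{l₁,s} : p_{l₂,s}) equals ln(1 + (l₁−l₂)²/(4s²)). -/
open MeasureTheory Real

/-! Translating both densities by `-l₁` reduces the claim to `l₁ = 0`. Let `g m` be the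
divergence from `p_{0,s}` to `p_{m,s}`. The location score
`∂ₘ log p_{m,s}(x) = 2(x - m)/(s² + (x - m)²)` is bounded by `1/s`, so the integrand of `g m` is
dominated by `|m|/s` times `p_{0,s}` and `g` may be differentiated under the integral:
`g' m = -∫ p_{0,s} · score`. An explicit antiderivative (logarithms and arctangents, by partial
fractions) evaluates this to `2m/(m² + 4s²)`, the derivative of `log (1 + m²/(4s²))`; both
functions vanish at `m = 0`. -/

open Filter Topology

section Cauchy

variable {s : ℝ}

lemma cauchyPdf_pos (hs : 0 < s) (l x : ℝ) : 0 < cauchyPdf l s x := by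
  unfold cauchyPdf
  positivity

lemma cauchyPdf_sub_right (l x a : ℝ) : cauchyPdf l s (x - a) = cauchyPdf (l + a) s x := by
  rw [cauchyPdf, cauchyPdf, sub_sub, add_comm a]

lemma continuous_cauchyPdf (hs : 0 < s) (l : ℝ) : Continuous (cauchyPdf l s) :=
  continuous_const.div (by fun_prop) fun x => by positivity

lemma integrable_cauchyPdf (hs : 0 < s) (l : ℝ) : Integrable (cauchyPdf l s) := by
  convert ProbabilityTheory.integrable_cauchyPDFReal l (γ := s.toNNReal) using 1
  ext x
  rw [ProbabilityTheory.cauchyPDFReal_def, Real.coe_toNNReal _ hs.le, cauchyPdf]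
  field_simp
  ring

lemma hasDerivAt_log_cauchyPdf (hs : 0 < s) (l x : ℝ) :
    HasDerivAt (fun l => log (cauchyPdf l s x)) (2 * (x - l) / (s ^ 2 + (x - l) ^ 2)) l := by
  have hq : HasDerivAt (fun l => s ^ 2 + (x - l) ^ 2) (-(2 * (x - l))) l := by
    simpa using (((hasDerivAt_id l).const_sub x).pow 2).const_add (s ^ 2)
  refine (((hq.log (by positivity)).const_sub (log (s / π))).congr_deriv (by ring))
    |>.congr_of_eventuallyEq (Eventually.of_forall fun l' => ?_)
  simp only [cauchyPdf]
  rw [← div_div, log_div (by positivity) (by positivity)]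

lemma abs_two_mul_div_sq_add_sq_le (hs : 0 < s) (u : ℝ) : |2 * u / (s ^ 2 + u ^ 2)| ≤ s⁻¹ := by
  have hq : 0 < s ^ 2 + u ^ 2 := by positivity
  rw [abs_div, abs_of_pos hq, div_le_iff₀ hq, abs_mul, abs_two, ← sq_abs u]
  field_simp
  nlinarith [sq_nonneg (s - |u|)]

lemma abs_log_cauchyPdf_sub_le (hs : 0 < s) (l l' x : ℝ) :
    |log (cauchyPdf l s x) - log (cauchyPdf l' s x)| ≤ s⁻¹ * |l - l'| :=
  convex_univ.norm_image_sub_le_of_norm_hasDerivWithin_le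
    (fun l _ => (hasDerivAt_log_cauchyPdf hs l x).hasDerivWithinAt)
    (fun l _ => abs_two_mul_div_sq_add_sq_le hs (x - l)) (Set.mem_univ l') (Set.mem_univ l)

lemma integrable_cauchyPdf_mul_log_div (hs : 0 < s) (l₁ l₂ : ℝ) :
    Integrable fun x => cauchyPdf l₁ s x * log (cauchyPdf l₁ s x / cauchyPdf l₂ s x) := by
  refine (integrable_cauchyPdf hs l₁).bdd_mul (c := s⁻¹ * |l₁ - l₂|)
    ((continuous_cauchyPdf hs l₁).div (continuous_cauchyPdf hs l₂)
      fun x => (cauchyPdf_pos hs l₂ x).ne').measurable.log.aestronglyMeasurable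
    (Eventually.of_forall fun x => ?_) |>.congr (Eventually.of_forall fun x => mul_comm _ _)
  rw [norm_eq_abs, Pi.div_apply, log_div (cauchyPdf_pos hs l₁ x).ne' (cauchyPdf_pos hs l₂ x).ne']
  exact abs_log_cauchyPdf_sub_le hs l₁ l₂ x

lemma integrable_cauchyPdf_mul_score (hs : 0 < s) (l m : ℝ) :
    Integrable fun x => cauchyPdf l s x * (2 * (x - m) / (s ^ 2 + (x - m) ^ 2)) :=
  (integrable_cauchyPdf hs l).bdd_mul (c := s⁻¹)
    (Continuous.div (by fun_prop) (by fun_prop) fun x => by positivity).aestronglyMeasurable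
    (Eventually.of_forall fun x => abs_two_mul_div_sq_add_sq_le hs (x - m))
    |>.congr (Eventually.of_forall fun x => mul_comm _ _)

lemma hasDerivAt_integral_cauchyPdf_mul_log_div (hs : 0 < s) (l₁ l₂ : ℝ) :
    HasDerivAt (fun l => ∫ x, cauchyPdf l₁ s x * log (cauchyPdf l₁ s x / cauchyPdf l s x))
      (-∫ x, cauchyPdf l₁ s x * (2 * (x - l₂) / (s ^ 2 + (x - l₂) ^ 2))) l₂ := by
  have h_diff (x l : ℝ) :
      HasDerivAt (fun l => cauchyPdf l₁ s x * log (cauchyPdf l₁ s x / cauchyPdf l s x))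
        (-(cauchyPdf l₁ s x * (2 * (x - l) / (s ^ 2 + (x - l) ^ 2)))) l := by
    refine ((hasDerivAt_log_cauchyPdf hs l x).const_sub (log (cauchyPdf l₁ s x))
      |>.const_mul (cauchyPdf l₁ s x) |>.congr_deriv (mul_neg _ _))
      |>.congr_of_eventuallyEq (Eventually.of_forall fun l' => ?_)
    simp only [log_div (cauchyPdf_pos hs l₁ x).ne' (cauchyPdf_pos hs l' x).ne']
  rw [← integral_neg]
  refine (hasDerivAt_integral_of_dominated_loc_of_deriv_le
    (bound := fun x => s⁻¹ * cauchyPdf l₁ s x) univ_mem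
    (Eventually.of_forall fun l => (integrable_cauchyPdf_mul_log_div hs l₁ l).aestronglyMeasurable)
    (integrable_cauchyPdf_mul_log_div hs l₁ l₂)
    (integrable_cauchyPdf_mul_score hs l₁ l₂).neg.aestronglyMeasurable
    (Eventually.of_forall fun x l _ => ?_) ((integrable_cauchyPdf hs l₁).const_mul _)
    (Eventually.of_forall fun x l _ => h_diff x l)).2
  rw [norm_neg, norm_mul, norm_of_nonneg (cauchyPdf_pos hs l₁ x).le, mul_comm]
  exact mul_le_mul_of_nonneg_right (abs_two_mul_div_sq_add_sq_le hs (x - l))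
    (cauchyPdf_pos hs l₁ x).le

lemma tendsto_arctan_sub_div_atTop (hs : 0 < s) (c : ℝ) :
    Tendsto (fun x => arctan ((x - c) / s)) atTop (𝓝 (π / 2)) :=
  (tendsto_arctan_atTop.mono_right nhdsWithin_le_nhds).comp
    ((tendsto_atTop_add_const_right _ (-c) tendsto_id).atTop_div_const hs)

lemma tendsto_arctan_sub_div_atBot (hs : 0 < s) (c : ℝ) :
    Tendsto (fun x => arctan ((x - c) / s)) atBot (𝓝 (-(π / 2))) :=
  (tendsto_arctan_atBot.mono_right nhdsWithin_le_nhds).comp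
    ((tendsto_atBot_add_const_right _ (-c) tendsto_id).atBot_div_const hs)

lemma tendsto_log_sq_add_sub_log_sq_add_cobounded (hs : 0 < s) (m : ℝ) :
    Tendsto (fun x => log (s ^ 2 + (x - m) ^ 2) - log (s ^ 2 + x ^ 2))
      (Bornology.cobounded ℝ) (𝓝 0) := by
  have hφ : ContinuousAt
      (fun t : ℝ => log (((1 - m * t) ^ 2 + s ^ 2 * t ^ 2) / (1 + s ^ 2 * t ^ 2))) 0 :=
    ContinuousAt.log (ContinuousAt.div (by fun_prop) (by fun_prop) (by simp)) (by simp)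
  replace hφ := hφ.tendsto
  norm_num at hφ
  refine (hφ.comp tendsto_inv₀_cobounded).congr' ?_
  filter_upwards [Bornology.eventually_ne_cobounded 0] with x hx
  rw [Function.comp_apply, ← log_div (by positivity) (by positivity)]
  congr 1
  field_simp
  ring

-- From partial fractions; the junk value `4 * s ^ 2 / 0 = 0` makes it wrong for `m = 0`.
noncomputable def cauchyScoreAntideriv (s m x : ℝ) : ℝ :=
  (s * (log (s ^ 2 + (x - m) ^ 2) - log (s ^ 2 + x ^ 2)) - 2 * m * arctan (x / s)
    - 4 * s ^ 2 / m * (arctan (x / s) - arctan ((x - m) / s))) / (π * (m ^ 2 + 4 * s ^ 2))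

lemma hasDerivAt_cauchyScoreAntideriv (hs : 0 < s) {m : ℝ} (hm : m ≠ 0) (x : ℝ) :
    HasDerivAt (cauchyScoreAntideriv s m)
      (cauchyPdf 0 s x * (2 * (x - m) / (s ^ 2 + (x - m) ^ 2))) x := by
  have hlog (c : ℝ) : HasDerivAt (fun x => log (s ^ 2 + (x - c) ^ 2))
      (2 * (x - c) / (s ^ 2 + (x - c) ^ 2)) x := by
    have hq : s ^ 2 + (x - c) ^ 2 ≠ 0 := by positivity
    simpa using ((((hasDerivAt_id x).sub_const c).pow 2).const_add (s ^ 2)).log hq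
  have harctan (c : ℝ) : HasDerivAt (fun x => arctan ((x - c) / s))
      (1 / (1 + ((x - c) / s) ^ 2) * (1 / s)) x := by
    simpa using (((hasDerivAt_id x).sub_const c).div_const s).arctan
  have hlog₀ : HasDerivAt (fun x => log (s ^ 2 + x ^ 2)) (2 * x / (s ^ 2 + x ^ 2)) x := by
    simpa using hlog 0
  have harctan₀ : HasDerivAt (fun x => arctan (x / s)) (1 / (1 + (x / s) ^ 2) * (1 / s)) x := by
    simpa using harctan 0
  have h := ((((hlog m).sub hlog₀).const_mul s).sub (harctan₀.const_mul (2 * m))).sub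
    ((harctan₀.sub (harctan m)).const_mul (4 * s ^ 2 / m)) |>.div_const (π * (m ^ 2 + 4 * s ^ 2))
  refine h.congr_deriv ?_
  simp only [cauchyPdf, sub_zero]
  field_simp
  ring

lemma tendsto_cauchyScoreAntideriv_atTop (hs : 0 < s) (m : ℝ) :
    Tendsto (cauchyScoreAntideriv s m) atTop (𝓝 (-(m / (m ^ 2 + 4 * s ^ 2)))) := by
  have harctan₀ : Tendsto (fun x => arctan (x / s)) atTop (𝓝 (π / 2)) := by
    simpa using tendsto_arctan_sub_div_atTop hs 0
  have h := ((((tendsto_log_sq_add_sub_log_sq_add_cobounded hs m).mono_left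
    IsOrderBornology.atTop_le_cobounded).const_mul s).sub (harctan₀.const_mul (2 * m))).sub
    ((harctan₀.sub (tendsto_arctan_sub_div_atTop hs m)).const_mul (4 * s ^ 2 / m))
    |>.div_const (π * (m ^ 2 + 4 * s ^ 2))
  convert h using 2
  · rfl
  · field_simp
    ring

lemma tendsto_cauchyScoreAntideriv_atBot (hs : 0 < s) (m : ℝ) :
    Tendsto (cauchyScoreAntideriv s m) atBot (𝓝 (m / (m ^ 2 + 4 * s ^ 2))) := by
  have harctan₀ : Tendsto (fun x => arctan (x / s)) atBot (𝓝 (-(π / 2))) := by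
    simpa using tendsto_arctan_sub_div_atBot hs 0
  have h := ((((tendsto_log_sq_add_sub_log_sq_add_cobounded hs m).mono_left
    IsOrderBornology.atBot_le_cobounded).const_mul s).sub (harctan₀.const_mul (2 * m))).sub
    ((harctan₀.sub (tendsto_arctan_sub_div_atBot hs m)).const_mul (4 * s ^ 2 / m))
    |>.div_const (π * (m ^ 2 + 4 * s ^ 2))
  convert h using 2
  · rfl
  · field_simp
    ring

lemma integral_cauchyPdf_mul_score (hs : 0 < s) (m : ℝ) :
    ∫ x, cauchyPdf 0 s x * (2 * (x - m) / (s ^ 2 + (x - m) ^ 2)) =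
      -(2 * m / (m ^ 2 + 4 * s ^ 2)) := by
  rcases eq_or_ne m 0 with rfl | hm
  · set f := fun x => cauchyPdf 0 s x * (2 * (x - 0) / (s ^ 2 + (x - 0) ^ 2))
    have hf_odd : ∀ x, f (-x) = -f x := fun x => by simp only [f, cauchyPdf]; ring
    have h := integral_neg_eq_self f volume
    simp only [hf_odd, integral_neg] at h
    simp only [mul_zero, zero_div, neg_zero]
    linarith
  · rw [integral_of_hasDerivAt_of_tendsto (hasDerivAt_cauchyScoreAntideriv hs hm)
      (integrable_cauchyPdf_mul_score hs 0 m) (tendsto_cauchyScoreAntideriv_atBot hs m)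
      (tendsto_cauchyScoreAntideriv_atTop hs m)]
    ring

lemma integral_cauchyPdf_zero_mul_log_div (hs : 0 < s) (m : ℝ) :
    ∫ x, cauchyPdf 0 s x * log (cauchyPdf 0 s x / cauchyPdf m s x) =
      log (1 + m ^ 2 / (4 * s ^ 2)) := by
  set g := fun m => ∫ x, cauchyPdf 0 s x * log (cauchyPdf 0 s x / cauchyPdf m s x)
  set h := fun m : ℝ => log (1 + m ^ 2 / (4 * s ^ 2))
  have hg (m : ℝ) : HasDerivAt g (2 * m / (m ^ 2 + 4 * s ^ 2)) m := by
    simpa [integral_cauchyPdf_mul_score hs] using hasDerivAt_integral_cauchyPdf_mul_log_div hs 0 m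
  have hh (m : ℝ) : HasDerivAt h (2 * m / (m ^ 2 + 4 * s ^ 2)) m := by
    have := (((hasDerivAt_pow 2 m).div_const (4 * s ^ 2)).const_add 1).log (by positivity)
    convert this using 1
    field_simp
    ring
  have hg₀ : g 0 = 0 := by
    simp [g, div_self (cauchyPdf_pos hs 0 _).ne']
  have hconst := is_const_of_deriv_eq_zero (fun m => ((hg m).sub (hh m)).differentiableAt)
    (fun m => by simp [((hg m).sub (hh m)).deriv]) m 0
  simpa [hg₀, h, sub_eq_zero] using hconst

end Cauchy

theorem stmt_9 (l₁ l₂ s : ℝ) (hs : 0 < s) :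
    ∫ x : ℝ, cauchyPdf l₁ s x * Real.log (cauchyPdf l₁ s x / cauchyPdf l₂ s x) =
      Real.log (1 + (l₁ - l₂) ^ 2 / (4 * s ^ 2)) := by
  have h := integral_sub_right_eq_self (μ := volume)
    (fun x => cauchyPdf 0 s x * log (cauchyPdf 0 s x / cauchyPdf (l₂ - l₁) s x)) l₁
  simp only [cauchyPdf_sub_right, zero_add, sub_add_cancel] at h
  rw [h, integral_cauchyPdf_zero_mul_log_div hs, ← neg_sub, neg_sq]
end

section
/- The KL divergence between Cauchy densities satisfies the location-scale invariance KL(p_{l₁,s₁} : p_{l₂,s₂}) = KL(p_{0,1} : p_{(l₂−l₁)/s₁, s₂/s₁}) for all l₁, l₂ ∈ ℝ and s₁, s₂ > 0. -/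
/-! The substitution `y = (x - l₁) / s₁` maps `p_{l,s}` to `s₁⁻¹ • p_{(l - l₁)/s₁, s/s₁}`; the factor
`s₁⁻¹` cancels inside the logarithm and is absorbed by the Jacobian of the substitution. -/

open MeasureTheory Real

theorem integral_inv_mul_comp_sub_div (g : ℝ → ℝ) (a : ℝ) {c : ℝ} (hc : 0 < c) :
    ∫ x : ℝ, c⁻¹ * g ((x - a) / c) = ∫ y : ℝ, g y := by
  rw [integral_const_mul, integral_sub_right_eq_self (fun x => g (x / c)) a,
    Measure.integral_comp_div g c, abs_of_pos hc, smul_eq_mul, inv_mul_cancel_left₀ hc.ne']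

theorem cauchyPdf_eq_inv_mul_cauchyPdf_sub_div (l s a : ℝ) {c : ℝ} (hc : c ≠ 0) (x : ℝ) :
    cauchyPdf l s x = c⁻¹ * cauchyPdf ((l - a) / c) (s / c) ((x - a) / c) := by
  unfold cauchyPdf
  rw [div_sub_div_same, sub_sub_sub_cancel_right, div_pow, div_pow, ← add_div, mul_div_assoc' π,
    ← mul_div_assoc, show c⁻¹ * (s / c) = s / c ^ 2 by ring,
    div_div_div_cancel_right₀ (pow_ne_zero 2 hc)]

theorem stmt_10_general (l₁ l₂ s₁ s₂ : ℝ) (hs₁ : 0 < s₁) :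
    cauchyKL l₁ s₁ l₂ s₂ = cauchyKL 0 1 ((l₂ - l₁) / s₁) (s₂ / s₁) := by
  have hpdf (l s x : ℝ) := cauchyPdf_eq_inv_mul_cauchyPdf_sub_div l s l₁ hs₁.ne' x
  have hinv : s₁⁻¹ ≠ 0 := inv_ne_zero hs₁.ne'
  unfold cauchyKL
  refine Eq.trans ?_ (integral_inv_mul_comp_sub_div _ l₁ hs₁)
  congr 1 with x
  rw [hpdf l₁ s₁ x, hpdf l₂ s₂ x, mul_div_mul_left _ _ hinv, sub_self, zero_div, div_self hs₁.ne']
  ring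

theorem stmt_10 (l₁ l₂ s₁ s₂ : ℝ) (hs₁ : 0 < s₁) (hs₂ : 0 < s₂) :
    cauchyKL l₁ s₁ l₂ s₂ = cauchyKL 0 1 ((l₂ - l₁) / s₁) (s₂ / s₁) :=
  stmt_10_general l₁ l₂ s₁ s₂ hs₁
end

section
/- For positive reals d, f and real e with 4df − e² > 0, the partial derivative with respect to d of ∫_{−∞}^{∞} ln(dx² + ex + f)/(x² + 1) dx equals ∫_{−∞}^{∞} x²/((dx² + ex + f)(x² + 1)) dx, and, whenever (d−f)² + e² > 0, this equals π·((d−f)(4df−e²) + (−2df+e²+2f²)√(4df−e²)) / ((d²−2df+e²+f²)(4df−e²)). -/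
open MeasureTheory Real Filter Topology


-- quadratic positivity / lower bound
lemma stmt13_quad_ge {a b c β x : ℝ} (h1 : 0 < a - β) (h2 : b ^ 2 < 4 * (a - β) * (c - β)) :
    β * (x ^ 2 + 1) ≤ a * x ^ 2 + b * x + c := by
  nlinarith [sq_nonneg (2 * (a - β) * x + b)]

lemma stmt13_quad_pos {a b c x : ℝ} (ha : 0 < a) (h2 : b ^ 2 < 4 * a * c) :
    0 < a * x ^ 2 + b * x + c := by
  nlinarith [sq_nonneg (2 * a * x + b)]

-- pointwise bound
lemma stmt13_point_bound {q β x : ℝ} (hβ : 0 < β) (hq : β * (x ^ 2 + 1) ≤ q) :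
    x ^ 2 / (q * (x ^ 2 + 1)) ≤ β⁻¹ * (1 + x ^ 2)⁻¹ := by
  have h1 : 0 < x ^ 2 + 1 := by positivity
  have hq0 : 0 < q := lt_of_lt_of_le (by positivity) hq
  calc x ^ 2 / (q * (x ^ 2 + 1)) ≤ (x ^ 2 + 1) / ((β * (x ^ 2 + 1)) * (x ^ 2 + 1)) := by
        apply div_le_div₀ (by positivity) (by nlinarith) (by positivity)
        exact mul_le_mul_of_nonneg_right hq h1.le
    _ = β⁻¹ * (1 + x ^ 2)⁻¹ := by field_simp; ring


lemma stmt13_log_quot_bound (x : ℝ) : Real.log (1 + x ^ 2) / (1 + x ^ 2) ≤ 8 * (1 + |x|) ^ (-(3/2) : ℝ) := by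
  have hu : (1:ℝ) ≤ 1 + x ^ 2 := by nlinarith [sq_nonneg x]
  have hu0 : (0:ℝ) < 1 + x ^ 2 := by positivity
  have hv : (1:ℝ) ≤ 1 + |x| := by simp [abs_nonneg]
  have hv0 : (0:ℝ) < 1 + |x| := by positivity
  have hlog : Real.log (1 + x ^ 2) ≤ 4 * (1 + x ^ 2) ^ ((1:ℝ)/4) := by
    have h1 : Real.log ((1 + x ^ 2) ^ ((1:ℝ)/4)) ≤ (1 + x ^ 2) ^ ((1:ℝ)/4) - 1 :=
      Real.log_le_sub_one_of_pos (by positivity)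
    rw [Real.log_rpow hu0] at h1
    nlinarith [Real.rpow_nonneg hu0.le ((1:ℝ)/4)]
  have hv2 : (1 + |x|) ^ ((3:ℝ)/2) ≤ 2 * (1 + x ^ 2) ^ ((3:ℝ)/4) := by
    have h2 : (1 + |x|) ^ 2 ≤ 2 * (1 + x ^ 2) := by nlinarith [sq_abs x, sq_nonneg (|x| - 1)]
    have h3 := Real.rpow_le_rpow (by positivity) h2 (by norm_num : (0:ℝ) ≤ 3/4)
    calc (1 + |x|) ^ ((3:ℝ)/2) = ((1 + |x|) ^ 2) ^ ((3:ℝ)/4) := by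
          rw [← Real.rpow_natCast _ 2, ← Real.rpow_mul hv0.le]; norm_num
      _ ≤ (2 * (1 + x ^ 2)) ^ ((3:ℝ)/4) := h3
      _ ≤ 2 * (1 + x ^ 2) ^ ((3:ℝ)/4) := by
          rw [Real.mul_rpow (by norm_num) hu0.le]
          apply mul_le_mul_of_nonneg_right _ (Real.rpow_nonneg hu0.le _)
          calc (2:ℝ) ^ ((3:ℝ)/4) ≤ 2 ^ (1:ℝ) :=
                Real.rpow_le_rpow_of_exponent_le (by norm_num) (by norm_num)
            _ = 2 := by norm_num
  have key : Real.log (1 + x ^ 2) * (1 + |x|) ^ ((3:ℝ)/2) ≤ 8 * (1 + x ^ 2) := by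
    have hl0 : 0 ≤ Real.log (1 + x ^ 2) := Real.log_nonneg hu
    calc Real.log (1 + x ^ 2) * (1 + |x|) ^ ((3:ℝ)/2)
        ≤ (4 * (1 + x ^ 2) ^ ((1:ℝ)/4)) * (2 * (1 + x ^ 2) ^ ((3:ℝ)/4)) :=
          mul_le_mul hlog hv2 (Real.rpow_nonneg hv0.le _) (by positivity)
      _ = 8 * ((1 + x ^ 2) ^ ((1:ℝ)/4) * (1 + x ^ 2) ^ ((3:ℝ)/4)) := by ring
      _ = 8 * (1 + x ^ 2) := by rw [← Real.rpow_add hu0]; norm_num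
  have h8 : 8 * (1 + |x|) ^ (-(3/2) : ℝ) = 8 / (1 + |x|) ^ ((3:ℝ)/2) := by
    rw [show (-(3/2) : ℝ) = -(3/2) from rfl, Real.rpow_neg hv0.le]; ring_nf
  rw [h8, div_le_div_iff₀ hu0 (Real.rpow_pos_of_pos hv0 _)]
  exact key

-- integrable japanese
lemma stmt13_integrable_jap : Integrable (fun x : ℝ => (1 + |x|) ^ (-(3/2) : ℝ)) := by
  have := integrable_one_add_norm (E := ℝ) (μ := volume) (r := 3/2) (by simp; norm_num)
  simpa [Real.norm_eq_abs] using this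


lemma stmt13_beta_exists (d e f : ℝ) (hd : 0 < d) (hf : 0 < f) (h : 0 < 4 * d * f - e ^ 2) :
    ∃ β > 0, ∀ t : ℝ, d / 2 ≤ t → t ≤ 3 * d / 2 → (4 * d * f - e ^ 2) / 2 ≤ 4 * t * f - e ^ 2 →
      ∀ x : ℝ, β * (x ^ 2 + 1) ≤ t * x ^ 2 + e * x + f := by
  set c := 4 * d * f - e ^ 2 with hc
  refine ⟨min (min (d / 4) (f / 2)) (c / (16 * (3 * d / 2 + f))), by positivity, ?_⟩
  intro t ht1 ht2 ht3 x
  set β := min (min (d / 4) (f / 2)) (c / (16 * (3 * d / 2 + f))) with hβ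
  have hβ1 : β ≤ d / 4 := le_trans (min_le_left _ _) (min_le_left _ _)
  have hβ2 : β ≤ f / 2 := le_trans (min_le_left _ _) (min_le_right _ _)
  have hβ3 : β ≤ c / (16 * (3 * d / 2 + f)) := min_le_right _ _
  have hβ0 : 0 < β := by positivity
  apply stmt13_quad_ge (by nlinarith)
  have hdf : 0 < 3 * d / 2 + f := by positivity
  have h16 : β * (16 * (3 * d / 2 + f)) ≤ c := (le_div_iff₀ (by positivity)).mp hβ3
  nlinarith [mul_le_mul_of_nonneg_left ht2 (by positivity : (0:ℝ) ≤ 4 * β),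
    mul_pos hβ0 hβ0, mul_pos hβ0 hf]

lemma stmt13_integrand_cont (t e f : ℝ) (hq : ∀ x : ℝ, 0 < t * x ^ 2 + e * x + f) :
    Continuous (fun x : ℝ => x ^ 2 / ((t * x ^ 2 + e * x + f) * (x ^ 2 + 1))) := by
  apply Continuous.div (by continuity) (by continuity)
  intro x
  have h1 : (0:ℝ) < x ^ 2 + 1 := by positivity
  exact ne_of_gt (mul_pos (hq x) h1)

lemma stmt13_integrand_integrable (t e f β : ℝ) (hβ : 0 < β)
    (hlow : ∀ x : ℝ, β * (x ^ 2 + 1) ≤ t * x ^ 2 + e * x + f) :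
    Integrable (fun x : ℝ => x ^ 2 / ((t * x ^ 2 + e * x + f) * (x ^ 2 + 1))) := by
  have hq : ∀ x : ℝ, 0 < t * x ^ 2 + e * x + f :=
    fun x => lt_of_lt_of_le (by positivity) (hlow x)
  apply Integrable.mono' (integrable_inv_one_add_sq.const_mul β⁻¹)
    ((stmt13_integrand_cont t e f hq).aestronglyMeasurable)
  refine Eventually.of_forall fun x => ?_
  have h1 : (0:ℝ) < x ^ 2 + 1 := by positivity
  rw [Real.norm_eq_abs, abs_of_nonneg (div_nonneg (sq_nonneg x) (mul_pos (hq x) h1).le)]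
  exact stmt13_point_bound hβ (hlow x)


lemma stmt13_log_integrand_integrable (t e f β : ℝ) (hβ : 0 < β) (ht : 0 < t) (hf : 0 < f)
    (hlow : ∀ x : ℝ, β * (x ^ 2 + 1) ≤ t * x ^ 2 + e * x + f) :
    Integrable (fun x : ℝ => Real.log (t * x ^ 2 + e * x + f) / (x ^ 2 + 1)) := by
  have hq : ∀ x : ℝ, 0 < t * x ^ 2 + e * x + f :=
    fun x => lt_of_lt_of_le (by positivity) (hlow x)
  set M := t + |e| + f with hM
  have hM0 : 0 < M := by positivity
  have hup : ∀ x : ℝ, t * x ^ 2 + e * x + f ≤ M * (x ^ 2 + 1) := by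
    intro x
    have h1 : e * x ≤ |e| * (x ^ 2 + 1) := by
      have h2 : e * x ≤ |e * x| := le_abs_self _
      rw [abs_mul] at h2
      nlinarith [sq_nonneg (|x| - 1), sq_abs x, abs_nonneg e, abs_nonneg x]
    nlinarith [sq_nonneg x, abs_nonneg e]
  set K := |Real.log β| + |Real.log M| with hK
  have hbd : ∀ x : ℝ, |Real.log (t * x ^ 2 + e * x + f) / (x ^ 2 + 1)| ≤
      K * (1 + x ^ 2)⁻¹ + 8 * (1 + |x|) ^ (-(3/2) : ℝ) := by
    intro x
    have h1 : (0:ℝ) < x ^ 2 + 1 := by positivity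
    have hlogx : 0 ≤ Real.log (x ^ 2 + 1) := Real.log_nonneg (by nlinarith [sq_nonneg x])
    have habs : |Real.log (t * x ^ 2 + e * x + f)| ≤ K + Real.log (x ^ 2 + 1) := by
      rw [abs_le]
      constructor
      · have hge : Real.log β + Real.log (x ^ 2 + 1) ≤ Real.log (t * x ^ 2 + e * x + f) := by
          rw [← Real.log_mul hβ.ne' h1.ne']
          exact Real.log_le_log (by positivity) (hlow x)
        have : -|Real.log β| ≤ Real.log β := neg_abs_le _
        nlinarith [abs_nonneg (Real.log M)]
      · have hle : Real.log (t * x ^ 2 + e * x + f) ≤ Real.log M + Real.log (x ^ 2 + 1) := by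
          rw [← Real.log_mul hM0.ne' h1.ne']
          exact Real.log_le_log (hq x) (hup x)
        nlinarith [le_abs_self (Real.log M), abs_nonneg (Real.log β)]
    rw [abs_div, abs_of_pos h1]
    calc |Real.log (t * x ^ 2 + e * x + f)| / (x ^ 2 + 1)
        ≤ (K + Real.log (x ^ 2 + 1)) / (x ^ 2 + 1) := by gcongr
      _ = K * (1 + x ^ 2)⁻¹ + Real.log (1 + x ^ 2) / (1 + x ^ 2) := by
          rw [show x ^ 2 + 1 = 1 + x ^ 2 by ring, add_div, div_eq_mul_inv]
      _ ≤ K * (1 + x ^ 2)⁻¹ + 8 * (1 + |x|) ^ (-(3/2) : ℝ) :=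
          add_le_add le_rfl (stmt13_log_quot_bound x)
  have hmeas : AEStronglyMeasurable (fun x : ℝ => Real.log (t * x ^ 2 + e * x + f) / (x ^ 2 + 1))
      (volume : Measure ℝ) := by
    apply Measurable.aestronglyMeasurable
    exact (Real.measurable_log.comp (by fun_prop)).div (by fun_prop)
  exact Integrable.mono' ((integrable_inv_one_add_sq.const_mul K).add (stmt13_integrable_jap.const_mul 8))
    hmeas (Eventually.of_forall hbd)


lemma stmt13_inv_atBot : Tendsto (fun x : ℝ => x⁻¹) atBot (𝓝 0) := by
  have h := (tendsto_neg_atBot_atTop : Tendsto (fun x : ℝ => -x) atBot atTop).inv_tendsto_atTop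
  have h2 := h.neg
  have h3 : (fun x : ℝ => -((fun x : ℝ => -x)⁻¹ x)) = fun x : ℝ => x⁻¹ := by
    funext x
    show -(-x)⁻¹ = x⁻¹
    rw [inv_neg, neg_neg]
  rw [h3] at h2
  simpa using h2

lemma stmt13_ratio_tendsto (d e f : ℝ) (hd : 0 < d) (hq : ∀ x : ℝ, 0 < d * x ^ 2 + e * x + f)
    (l : Filter ℝ) (hl : Tendsto (fun x : ℝ => x⁻¹) l (𝓝 0)) (hne : ∀ᶠ x in l, x ≠ 0) :
    Tendsto (fun x : ℝ => (x ^ 2 + 1) / (d * x ^ 2 + e * x + f)) l (𝓝 d⁻¹) := by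
  have h1 : Tendsto (fun x : ℝ => (1 + x⁻¹ * x⁻¹) / (d + e * x⁻¹ + f * (x⁻¹ * x⁻¹))) l
      (𝓝 ((1 + 0 * 0) / (d + e * 0 + f * (0 * 0)))) := by
    apply Tendsto.div
    · exact (tendsto_const_nhds.add (hl.mul hl))
    · exact (tendsto_const_nhds.add (hl.const_mul e)).add ((hl.mul hl).const_mul f)
    · simpa using hd.ne'
  have h2 : (1 + 0 * 0 : ℝ) / (d + e * 0 + f * (0 * 0)) = d⁻¹ := by norm_num
  rw [h2] at h1
  apply h1.congr'
  filter_upwards [hne] with x hx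
  have hqx := (hq x).ne'
  have hx2 : x ^ 2 ≠ 0 := pow_ne_zero 2 hx
  rw [div_eq_div_iff]
  · field_simp
  · have : d + e * x⁻¹ + f * (x⁻¹ * x⁻¹) = (d * x ^ 2 + e * x + f) * (x⁻¹ * x⁻¹) := by
      field_simp
    rw [this]
    exact mul_ne_zero hqx (mul_ne_zero (inv_ne_zero hx) (inv_ne_zero hx))
  · exact hqx

lemma stmt13_arctan_lim_top (a b : ℝ) (ha : 0 < a) :
    Tendsto (fun x : ℝ => Real.arctan (a * x + b)) atTop (𝓝 (π / 2)) := by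
  have h1 : Tendsto (fun x : ℝ => a * x + b) atTop atTop :=
    tendsto_atTop_add_const_right _ b (tendsto_id.const_mul_atTop ha)
  exact (Real.tendsto_arctan_atTop.mono_right nhdsWithin_le_nhds).comp h1

lemma stmt13_arctan_lim_bot (a b : ℝ) (ha : 0 < a) :
    Tendsto (fun x : ℝ => Real.arctan (a * x + b)) atBot (𝓝 (-(π / 2))) := by
  have h1 : Tendsto (fun x : ℝ => a * x + b) atBot atBot :=
    tendsto_atBot_add_const_right _ b (tendsto_id.const_mul_atBot ha)
  exact (Real.tendsto_arctan_atBot.mono_right nhdsWithin_le_nhds).comp h1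


lemma stmt13_hasDerivAt_G (d e f s Δ : ℝ) (hd : 0 < d) (hf : 0 < f) (h : 0 < 4 * d * f - e ^ 2)
    (hs : 0 < s) (hs2 : s ^ 2 = 4 * d * f - e ^ 2)
    (hΔ : Δ = (d - f) ^ 2 + e ^ 2) (hΔ0 : 0 < Δ)
    (hq : ∀ x : ℝ, 0 < d * x ^ 2 + e * x + f) (x : ℝ) :
    HasDerivAt (fun x : ℝ => e / (2 * Δ) * (Real.log (x ^ 2 + 1) - Real.log (d * x ^ 2 + e * x + f))
      + (e ^ 2 - 2 * d * f + 2 * f ^ 2) / (s * Δ) * Real.arctan ((2 * d * x + e) / s)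
      + (d - f) / Δ * Real.arctan x)
      (x ^ 2 / ((d * x ^ 2 + e * x + f) * (x ^ 2 + 1))) x := by
  have hx1 : (0:ℝ) < x ^ 2 + 1 := by positivity
  have h1 : HasDerivAt (fun x : ℝ => x ^ 2 + 1) (2 * x) x := by
    simpa using (hasDerivAt_pow 2 x).add_const 1
  have h2 : HasDerivAt (fun x : ℝ => d * x ^ 2 + e * x + f) (2 * d * x + e) x := by
    have := (((hasDerivAt_pow 2 x).const_mul d).add ((hasDerivAt_id x).const_mul e)).add_const f
    refine this.congr_deriv ?_
    ring
  have h3 := (h1.log hx1.ne').sub (h2.log (hq x).ne')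
  have h4 : HasDerivAt (fun x : ℝ => (2 * d * x + e) / s) (2 * d / s) x := by
    have := (((hasDerivAt_id x).const_mul (2 * d)).add_const e).div_const s
    simpa using this
  have h5 := h4.arctan
  have h6 := Real.hasDerivAt_arctan x
  have hsum := ((h3.const_mul (e / (2 * Δ))).add
    (h5.const_mul ((e ^ 2 - 2 * d * f + 2 * f ^ 2) / (s * Δ)))).add
    (h6.const_mul ((d - f) / Δ))
  refine hsum.congr_deriv ?_
  have hkey : 1 / (1 + ((2 * d * x + e) / s) ^ 2) * (2 * d / s) =
      s / (2 * (d * x ^ 2 + e * x + f)) := by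
    rw [div_mul_div_comm, one_mul]
    rw [div_eq_div_iff (by positivity) (mul_pos two_pos (hq x)).ne']
    have h7 : (1 + ((2 * d * x + e) / s) ^ 2) = (s ^ 2 + (2 * d * x + e) ^ 2) / s ^ 2 := by
      field_simp
    rw [h7]
    field_simp
    linear_combination (-1) * hs2
  rw [hkey]
  subst hΔ
  have hQ : d * x ^ 2 + e * x + f ≠ 0 := (hq x).ne'
  have hx1' : x ^ 2 + 1 ≠ 0 := hx1.ne'
  have hx2' : 1 + x ^ 2 ≠ 0 := by positivity
  have hQ' : x * (d * x + e) + f ≠ 0 := by rw [show x * (d * x + e) + f = d * x ^ 2 + e * x + f by ring]; exact hQ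
  field_simp
  ring


lemma stmt13_deriv_part (d e f : ℝ) (hd : 0 < d) (hf : 0 < f) (h : 0 < 4 * d * f - e ^ 2) :
    HasDerivAt (fun t : ℝ => ∫ x : ℝ, Real.log (t * x ^ 2 + e * x + f) / (x ^ 2 + 1))
      (∫ x : ℝ, x ^ 2 / ((d * x ^ 2 + e * x + f) * (x ^ 2 + 1))) d := by
  obtain ⟨β, hβ, hβlow⟩ := stmt13_beta_exists d e f hd hf h
  set ε := min (d / 2) ((4 * d * f - e ^ 2) / (8 * f)) with hε
  have hε0 : 0 < ε := by positivity
  -- ball membership gives hypotheses of hβlow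
  have hball : ∀ t ∈ Metric.ball d ε, d / 2 ≤ t ∧ t ≤ 3 * d / 2 ∧
      (4 * d * f - e ^ 2) / 2 ≤ 4 * t * f - e ^ 2 := by
    intro t ht
    rw [Metric.mem_ball, Real.dist_eq, abs_lt] at ht
    have h1 : ε ≤ d / 2 := min_le_left _ _
    have h2 : ε ≤ (4 * d * f - e ^ 2) / (8 * f) := min_le_right _ _
    refine ⟨by linarith, by linarith, ?_⟩
    have h3 : -((4 * d * f - e ^ 2) / (8 * f)) < t - d := by linarith
    have h4 := mul_lt_mul_of_pos_right h3 (by positivity : (0:ℝ) < 4 * f)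
    have h5 : -((4 * d * f - e ^ 2) / (8 * f)) * (4 * f) = -((4 * d * f - e ^ 2) / 2) := by
      field_simp; ring
    rw [h5] at h4
    linarith
  have hqd : ∀ x : ℝ, 0 < d * x ^ 2 + e * x + f := fun x =>
    lt_of_lt_of_le (by positivity) (hβlow d (by linarith) (by linarith) (by linarith) x)
  have key := hasDerivAt_integral_of_dominated_loc_of_deriv_le (μ := volume)
    (F := fun t x => Real.log (t * x ^ 2 + e * x + f) / (x ^ 2 + 1))
    (F' := fun t x => x ^ 2 / ((t * x ^ 2 + e * x + f) * (x ^ 2 + 1)))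
    (x₀ := d) (bound := fun x => β⁻¹ * (1 + x ^ 2)⁻¹) (Metric.ball_mem_nhds d hε0)
    (Eventually.of_forall fun t => by
      apply Measurable.aestronglyMeasurable
      exact (Real.measurable_log.comp (by fun_prop)).div (by fun_prop))
    (stmt13_log_integrand_integrable d e f β hβ hd hf
      (hβlow d (by linarith) (by linarith) (by linarith)))
    ((stmt13_integrand_cont d e f hqd).aestronglyMeasurable)
    (Eventually.of_forall fun x => by
      intro t ht
      obtain ⟨h1, h2, h3⟩ := hball t ht
      have hlow := hβlow t h1 h2 h3 x
      have hq : 0 < t * x ^ 2 + e * x + f := lt_of_lt_of_le (by positivity) hlow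
      have hx1 : (0:ℝ) < x ^ 2 + 1 := by positivity
      rw [Real.norm_eq_abs, abs_of_nonneg (div_nonneg (sq_nonneg x) (mul_pos hq hx1).le)]
      exact stmt13_point_bound hβ hlow)
    (integrable_inv_one_add_sq.const_mul β⁻¹)
    (Eventually.of_forall fun x => by
      intro t ht
      obtain ⟨h1, h2, h3⟩ := hball t ht
      have hq : 0 < t * x ^ 2 + e * x + f :=
        lt_of_lt_of_le (by positivity) (hβlow t h1 h2 h3 x)
      have hD : HasDerivAt (fun t : ℝ => t * x ^ 2 + e * x + f) (x ^ 2) t := by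
        simpa using (((hasDerivAt_id t).mul_const (x ^ 2)).add_const (e * x)).add_const f
      simpa [div_div] using (hD.log hq.ne').div_const (x ^ 2 + 1))
  exact key.2


lemma stmt13_closed_form (d e f : ℝ) (hd : 0 < d) (hf : 0 < f) (h : 0 < 4 * d * f - e ^ 2)
    (hΔ0 : 0 < (d - f) ^ 2 + e ^ 2) :
    ∫ x : ℝ, x ^ 2 / ((d * x ^ 2 + e * x + f) * (x ^ 2 + 1)) =
      π * ((d - f) * (4 * d * f - e ^ 2) +
          (-(2 * d * f) + e ^ 2 + 2 * f ^ 2) * Real.sqrt (4 * d * f - e ^ 2)) /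
        ((d ^ 2 - 2 * d * f + e ^ 2 + f ^ 2) * (4 * d * f - e ^ 2)) := by
  set s := Real.sqrt (4 * d * f - e ^ 2) with hsdef
  have hs : 0 < s := Real.sqrt_pos.2 h
  have hs2 : s ^ 2 = 4 * d * f - e ^ 2 := Real.sq_sqrt h.le
  set Δ := (d - f) ^ 2 + e ^ 2 with hΔdef
  have hq : ∀ x : ℝ, 0 < d * x ^ 2 + e * x + f := fun x => stmt13_quad_pos hd (by linarith)
  set G : ℝ → ℝ := fun x => e / (2 * Δ) *
      (Real.log (x ^ 2 + 1) - Real.log (d * x ^ 2 + e * x + f))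
      + (e ^ 2 - 2 * d * f + 2 * f ^ 2) / (s * Δ) * Real.arctan ((2 * d * x + e) / s)
      + (d - f) / Δ * Real.arctan x with hGdef
  have hG : ∀ x : ℝ, HasDerivAt G (x ^ 2 / ((d * x ^ 2 + e * x + f) * (x ^ 2 + 1))) x :=
    stmt13_hasDerivAt_G d e f s Δ hd hf h hs hs2 rfl hΔ0 hq
  have hint : Integrable (fun x : ℝ => x ^ 2 / ((d * x ^ 2 + e * x + f) * (x ^ 2 + 1))) := by
    obtain ⟨β, hβ, hβlow⟩ := stmt13_beta_exists d e f hd hf h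
    exact stmt13_integrand_integrable d e f β hβ
      (hβlow d (by linarith) (by linarith) (by linarith))
  -- log part limits
  have hlog : ∀ l : Filter ℝ, Tendsto (fun x : ℝ => x⁻¹) l (𝓝 0) → (∀ᶠ x in l, x ≠ 0) →
      Tendsto (fun x : ℝ => Real.log (x ^ 2 + 1) - Real.log (d * x ^ 2 + e * x + f)) l
        (𝓝 (Real.log d⁻¹)) := by
    intro l hl hne
    have h1 := (Real.continuousAt_log (by positivity : (d⁻¹ : ℝ) ≠ 0)).tendsto.comp
      (stmt13_ratio_tendsto d e f hd hq l hl hne)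
    apply h1.congr
    intro x
    exact Real.log_div (by positivity) (hq x).ne'
  -- arctan inner rewrite: (2*d*x+e)/s = (2*d/s)*x + e/s
  have harg : ∀ x : ℝ, (2 * d * x + e) / s = (2 * d / s) * x + e / s := by
    intro x; field_simp
  have hds : 0 < 2 * d / s := by positivity
  have hGtop : Tendsto G atTop (𝓝 (e / (2 * Δ) * Real.log d⁻¹
      + (e ^ 2 - 2 * d * f + 2 * f ^ 2) / (s * Δ) * (π / 2) + (d - f) / Δ * (π / 2))) := by
    apply Tendsto.add
    apply Tendsto.add
    · exact (hlog atTop tendsto_inv_atTop_zero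
        (eventually_atTop.2 ⟨1, fun x hx => by linarith⟩)).const_mul _
    · have := (stmt13_arctan_lim_top (2 * d / s) (e / s) hds).const_mul
        ((e ^ 2 - 2 * d * f + 2 * f ^ 2) / (s * Δ))
      apply this.congr
      intro x
      rw [harg x]
    · exact (Real.tendsto_arctan_atTop.mono_right nhdsWithin_le_nhds).const_mul _
  have hGbot : Tendsto G atBot (𝓝 (e / (2 * Δ) * Real.log d⁻¹
      + (e ^ 2 - 2 * d * f + 2 * f ^ 2) / (s * Δ) * (-(π / 2)) + (d - f) / Δ * (-(π / 2)))) := by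
    apply Tendsto.add
    apply Tendsto.add
    · exact (hlog atBot stmt13_inv_atBot
        (eventually_atBot.2 ⟨-1, fun x hx => by linarith⟩)).const_mul _
    · have := (stmt13_arctan_lim_bot (2 * d / s) (e / s) hds).const_mul
        ((e ^ 2 - 2 * d * f + 2 * f ^ 2) / (s * Δ))
      apply this.congr
      intro x
      rw [harg x]
    · exact (Real.tendsto_arctan_atBot.mono_right nhdsWithin_le_nhds).const_mul _
  have I1 := integral_Iic_of_hasDerivAt_of_tendsto' (a := 0) (fun x _ => hG x) hint.integrableOn hGbot
  have I2 := integral_Ioi_of_hasDerivAt_of_tendsto' (a := 0) (fun x _ => hG x) hint.integrableOn hGtop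
  have Isplit := intervalIntegral.integral_Iic_add_Ioi (b := (0:ℝ))
    (hint.integrableOn) (hint.integrableOn)
  rw [← Isplit, I1, I2]
  have hΔ0' : Δ ≠ 0 := hΔ0.ne'
  have heq : d ^ 2 - 2 * d * f + e ^ 2 + f ^ 2 = Δ := by rw [hΔdef]; ring
  rw [heq, ← hs2]
  field_simp
  ring


theorem stmt_13 (d e f : ℝ) (hd : 0 < d) (hf : 0 < f) (h : 0 < 4 * d * f - e ^ 2) :
    HasDerivAt (fun t : ℝ => ∫ x : ℝ, Real.log (t * x ^ 2 + e * x + f) / (x ^ 2 + 1))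
      (∫ x : ℝ, x ^ 2 / ((d * x ^ 2 + e * x + f) * (x ^ 2 + 1))) d ∧
    ((d - f) ^ 2 + e ^ 2 > 0 →
      ∫ x : ℝ, x ^ 2 / ((d * x ^ 2 + e * x + f) * (x ^ 2 + 1)) =
        π * ((d - f) * (4 * d * f - e ^ 2) +
            (-(2 * d * f) + e ^ 2 + 2 * f ^ 2) * Real.sqrt (4 * d * f - e ^ 2)) /
          ((d ^ 2 - 2 * d * f + e ^ 2 + f ^ 2) * (4 * d * f - e ^ 2))) :=
  ⟨stmt13_deriv_part d e f hd hf h, fun hΔ => stmt13_closed_form d e f hd hf h hΔ⟩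
end
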